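/- (Main Theorem, 'only if' direction) Suppose a probabilistic model (A, A₊, u_A) can be embedded into the quantum model Q_n for some n. Then there exist m ∈ ℕ and a real-linear subspace J of the m×m complex Hermitian matrices such that I ∈ J, J is closed under the Jordan product x∘y := ½(xy + yx), and there is a real-linear bijection T : A → J satisfying T(u_A) = I and T(A₊) = {x² : x ∈ J}. In other words, A is order-isomorphic to a Euclidean special Jordan algebra (realized as a Jordan subalgebra of Hermitian matrices) with its cone of squares. -/

import Mathlib

open Module
open scoped ComplexOrder

/-- A probabilistic model `(A, A₊, u_A)`: a finite-dimensional real vector space `A`,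
a closed generating pointed convex cone `A₊`, and an order unit `u_A ∈ A₊`. -/
structure ProbModel (V : Type) [NormedAddCommGroup V] [NormedSpace ℝ V]
    [FiniteDimensional ℝ V] where
  pos : Set V
  unit : V
  add_mem : ∀ x ∈ pos, ∀ y ∈ pos, x + y ∈ pos
  smul_mem : ∀ c : ℝ, 0 ≤ c → ∀ x ∈ pos, c • x ∈ pos
  pointed : ∀ x ∈ pos, -x ∈ pos → x = 0
  closed : IsClosed pos
  spanning : Submodule.span ℝ pos = ⊤
  unit_mem : unit ∈ pos
  orderUnit : ∀ v : V, ∃ t : ℝ, 0 ≤ t ∧ t • unit - v ∈ pos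

/-- The dual cone `A₊* = {ω ∈ A* : ω(e) ≥ 0 for all e ∈ A₊}`. -/
def ProbModel.dualPos {V : Type} [NormedAddCommGroup V] [NormedSpace ℝ V]
    [FiniteDimensional ℝ V] (M : ProbModel V) : Set (Dual ℝ V) :=
  {ω | ∀ e ∈ M.pos, 0 ≤ ω e}

/-- An embedding `(φ, ψ)` of a probabilistic model `M` into a probabilistic model `N`. -/
structure ModelEmbedding {V W : Type} [NormedAddCommGroup V] [NormedSpace ℝ V]
    [FiniteDimensional ℝ V] [NormedAddCommGroup W] [NormedSpace ℝ W]
    [FiniteDimensional ℝ W] (M : ProbModel V) (N : ProbModel W) where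
  φ : V →ₗ[ℝ] W
  ψ : Dual ℝ V →ₗ[ℝ] Dual ℝ W
  φ_pos : ∀ a ∈ M.pos, φ a ∈ N.pos
  ψ_pos : ∀ ω ∈ M.dualPos, ψ ω ∈ N.dualPos
  φ_unit : φ M.unit = N.unit
  pairing : ∀ (ω : Dual ℝ V) (e : V), ψ ω (φ e) = ω e

/-- An embedding `(φ, ψ)` of a probabilistic model `M` into the `n`-level quantum
model `Q_n`, whose effect space is the real vector space of `n × n` complex Hermitian
matrices with the cone of positive-semidefinite matrices and unit effect `I`; the dual
is identified with the same space via the trace pairing `(ω, e) = tr(ω·e)`. -/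
structure QEmbedding {V : Type} [NormedAddCommGroup V] [NormedSpace ℝ V]
    [FiniteDimensional ℝ V] (M : ProbModel V) (n : ℕ) where
  φ : V →ₗ[ℝ] Matrix (Fin n) (Fin n) ℂ
  ψ : Dual ℝ V →ₗ[ℝ] Matrix (Fin n) (Fin n) ℂ
  φ_herm : ∀ a : V, (φ a).IsHermitian
  ψ_herm : ∀ ω : Dual ℝ V, (ψ ω).IsHermitian
  φ_pos : ∀ a ∈ M.pos, (φ a).PosSemidef
  ψ_pos : ∀ ω ∈ M.dualPos, (ψ ω).PosSemidef
  φ_unit : φ M.unit = 1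
  pairing : ∀ (ω : Dual ℝ V) (e : V), (ψ ω * φ e).trace = (ω e : ℂ)

/-- The Jordan product `x ∘ y := ½(xy + yx)` of matrices. -/
noncomputable def jordan {n : ℕ} (x y : Matrix (Fin n) (Fin n) ℂ) : Matrix (Fin n) (Fin n) ℂ :=
  (1 / 2 : ℂ) • (x * y + y * x)

/-!
Choose finitely many `σᵢ ∈ A₊*` spanning `A*` (possible because `A₊` is closed and pointed).
Every `ψ ω` lives on the support of `s = ∑ ψ σᵢ`, so cutting the embedding down to that support
gives an embedding in which `ψ (∑ σᵢ)` is positive definite.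

For such an embedding, `P = φ ∘ ψᵀ` is a unital positive map fixing `J = φ(A)`, so Kadison's
inequality gives `P (x²) ≥ x²` for `x ∈ J`. Since `P` preserves the faithful functional
`tr (ψ (∑ σᵢ) ·)`, equality holds: `J` is closed under squares, hence under the Jordan product.
Square roots of positive elements of `J` are polynomials in them and so lie in `J`; conversely
`x² = φ (ψᵀ (x²))` with `ψᵀ (x²) ∈ A₊`.
-/

open Matrix Polynomial

namespace Matrix

variable {n : Type*} [Fintype n]

def compression {m : Type*} [Fintype m] (W : Matrix n m ℂ) :
    Matrix n n ℂ →ₗ[ℝ] Matrix m m ℂ where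
  toFun X := Wᴴ * X * W
  map_add' X Y := by rw [Matrix.mul_add, Matrix.add_mul]
  map_smul' c X := by rw [Matrix.mul_smul, Matrix.smul_mul]; rfl

theorem compression_apply {m : Type*} [Fintype m] (W : Matrix n m ℂ) (X : Matrix n n ℂ) :
    compression W X = Wᴴ * X * W := rfl

theorem PosSemidef.mulVec_eq_zero_of_le {X S : Matrix n n ℂ} (hX : X.PosSemidef)
    (hXS : (S - X).PosSemidef) {v : n → ℂ} (hv : S *ᵥ v = 0) : X *ᵥ v = 0 := by
  refine (hX.dotProduct_mulVec_zero_iff v).mp (le_antisymm ?_ (hX.dotProduct_mulVec_nonneg v))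
  have := hXS.dotProduct_mulVec_nonneg v
  rwa [sub_mulVec, hv, zero_sub, dotProduct_neg, neg_nonneg] at this

variable [DecidableEq n]

open scoped MatrixOrder in
theorem PosSemidef.trace_mul_nonneg {A B : Matrix n n ℂ} (hA : A.PosSemidef)
    (hB : B.PosSemidef) : 0 ≤ (A * B).trace := by
  obtain ⟨R, rfl⟩ := CStarAlgebra.nonneg_iff_eq_star_mul_self.mp hB.nonneg
  rw [← Matrix.mul_assoc, trace_mul_comm, ← Matrix.mul_assoc, star_eq_conjTranspose]
  exact (hA.mul_mul_conjTranspose_same R).trace_nonneg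

open scoped MatrixOrder in
theorem PosDef.eq_zero_of_trace_mul_eq_zero {S D : Matrix n n ℂ} (hS : S.PosDef)
    (hD : D.PosSemidef) (h : (S * D).trace = 0) : D = 0 := by
  obtain ⟨y, hy, rfl⟩ :=
    CStarAlgebra.isStrictlyPositive_iff_eq_star_mul_self.mp hS.isStrictlyPositive
  obtain ⟨R, rfl⟩ := CStarAlgebra.nonneg_iff_eq_star_mul_self.mp hD.nonneg
  have hRy : (R * yᴴ)ᴴ * (R * yᴴ) = y * (Rᴴ * R * yᴴ) := by
    simp only [conjTranspose_mul, conjTranspose_conjTranspose, Matrix.mul_assoc]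
  rw [star_eq_conjTranspose, star_eq_conjTranspose, Matrix.mul_assoc, trace_mul_comm,
    Matrix.mul_assoc, ← hRy, trace_conjTranspose_mul_self_eq_zero_iff] at h
  have hyu : IsUnit yᴴ := by simpa [star_eq_conjTranspose] using hy.star
  rw [hyu.mul_left_eq_zero.mp h, star_zero, Matrix.zero_mul]

theorem PosSemidef.mul_mul_eq_self_of_le {X S p : Matrix n n ℂ} (hX : X.PosSemidef)
    (hXS : (S - X).PosSemidef) (hp : p.IsHermitian) (hpS : p * S = S) : p * X * p = X := by
  have hS : S.IsHermitian := by simpa using (hXS.add hX).isHermitian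
  have hSp : S * p = S := by
    rw [← hS.eq, ← hp.eq, ← conjTranspose_mul, hpS]
  have hXp : X * p = X := by
    suffices X * (1 - p) = 0 by rwa [Matrix.mul_sub, Matrix.mul_one, sub_eq_zero, eq_comm] at this
    refine ext_iff_mulVec.mpr fun v => ?_
    rw [← mulVec_mulVec, zero_mulVec]
    refine hX.mulVec_eq_zero_of_le hXS ?_
    rw [mulVec_mulVec, Matrix.mul_sub, Matrix.mul_one, hSp, sub_self, zero_mulVec]
  have hpX : p * X = X := by
    rw [← hX.isHermitian.eq, ← hp.eq, ← conjTranspose_mul, hXp]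
  rw [hpX, hXp]

theorem submatrix_one_mul_conjTranspose_mul_diagonal {m : Type*} [Fintype m] {d : n → ℂ}
    {g : m → n} (hg : Function.Injective g) (hgd : ∀ i, d i ≠ 0 → ∃ j, g j = i) :
    (1 : Matrix n n ℂ).submatrix id g * ((1 : Matrix n n ℂ).submatrix id g)ᴴ * diagonal d =
      diagonal d := by
  ext i k
  rw [mul_diagonal]
  by_cases hk : d k = 0
  · simp only [hk, mul_zero, diagonal_apply]
    split_ifs with h <;> simp [h, hk]
  · obtain ⟨j, rfl⟩ := hgd k hk
    rw [mul_apply, Finset.sum_eq_single j]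
    · simp only [conjTranspose_apply, submatrix_apply, id, one_apply, diagonal_apply]
      split_ifs <;> simp_all
    · intro j' _ hj'
      simp [one_apply, hg.ne hj'.symm]
    · simp

theorem PosSemidef.exists_isometry_posDef {S : Matrix n n ℂ} (hS : S.PosSemidef) :
    ∃ (m : ℕ) (W : Matrix n (Fin m) ℂ), Wᴴ * W = 1 ∧ W * Wᴴ * S = S ∧ (Wᴴ * S * W).PosDef := by
  set U : Matrix n n ℂ := (hS.1.eigenvectorUnitary : Matrix n n ℂ)
  set d : n → ℝ := hS.1.eigenvalues
  have hU : Uᴴ * U = 1 := by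
    rw [← star_eq_conjTranspose, Unitary.coe_star_mul_self]
  set e := (Fintype.equivFin {i // d i ≠ 0}).symm
  set g : Fin _ → n := fun j => (e j).1
  have hg : Function.Injective g := fun a b h => e.injective (Subtype.ext h)
  set G := (1 : Matrix n n ℂ).submatrix (Equiv.refl n) g
  set D := diagonal fun i => (d i : ℂ)
  have hspec : S = U * D * Uᴴ := hS.1.spectral_theorem
  have hGG : Gᴴ * G = 1 := by
    rw [conjTranspose_submatrix, conjTranspose_one, one_submatrix_mul g (Equiv.refl n),
      submatrix_submatrix]
    exact submatrix_one _ hg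
  have hGDG : Gᴴ * D * G = diagonal fun j => (d (g j) : ℂ) := by
    rw [conjTranspose_submatrix, conjTranspose_one, one_submatrix_mul g (Equiv.refl n),
      mul_submatrix_one (Equiv.refl n) g, submatrix_submatrix]
    exact submatrix_diagonal _ _ hg
  have hGGD : G * Gᴴ * D = D :=
    submatrix_one_mul_conjTranspose_mul_diagonal hg fun i hi =>
      ⟨e.symm ⟨i, by simpa using hi⟩, by simp [g]⟩
  refine ⟨_, U * G, ?_, ?_, ?_⟩
  · simp only [conjTranspose_mul, Matrix.mul_assoc, ← Matrix.mul_assoc Uᴴ U, hU, Matrix.one_mul,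
      hGG]
  · calc U * G * (U * G)ᴴ * S = U * (G * Gᴴ * D) * Uᴴ := by
          simp only [hspec, conjTranspose_mul, Matrix.mul_assoc, ← Matrix.mul_assoc Uᴴ U, hU,
            Matrix.one_mul]
      _ = S := by rw [hGGD, hspec]
  · have : (U * G)ᴴ * S * (U * G) = Gᴴ * D * G := by
      simp only [hspec, conjTranspose_mul, Matrix.mul_assoc, ← Matrix.mul_assoc Uᴴ U, hU,
        Matrix.one_mul]
    rw [this, hGDG, posDef_diagonal_iff]
    exact fun j => Complex.zero_lt_real.mpr ((hS.eigenvalues_nonneg _).lt_of_ne' (e j).2)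

theorem IsHermitian.exists_spectral_resolution {x : Matrix n n ℂ} (hx : x.IsHermitian) :
    ∃ (p : n → Matrix n n ℂ) (μ : n → ℝ), (∀ j, (p j).PosSemidef) ∧ ∑ j, p j = 1 ∧
      ∑ j, μ j • p j = x ∧ ∑ j, μ j ^ 2 • p j = x * x := by
  set c := Unitary.conjStarAlgAut ℂ (Matrix n n ℂ) hx.eigenvectorUnitary
  have hsum (f : n → ℝ) : ∑ j, f j • c (single j j 1) = c (diagonal fun i => (f i : ℂ)) := by
    rw [← sum_single_eq_diagonal, map_sum]
    refine Finset.sum_congr rfl fun j _ => ?_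
    rw [RCLike.real_smul_eq_coe_smul (K := ℂ), ← map_smul, smul_single, smul_eq_mul, mul_one]
    rfl
  have hspec : x = c (diagonal fun i => (hx.eigenvalues i : ℂ)) := hx.spectral_theorem
  refine ⟨fun j => c (single j j 1), hx.eigenvalues, fun j => ?_, ?_, ?_, ?_⟩
  · show (c (single j j 1)).PosSemidef
    rw [Unitary.conjStarAlgAut_apply, ← diagonal_single, star_eq_conjTranspose]
    exact (PosSemidef.diagonal (Pi.single_nonneg.mpr zero_le_one)).mul_mul_conjTranspose_same _
  · have := hsum 1
    simp only [Pi.one_apply, one_smul, Complex.ofReal_one] at this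
    rw [this, diagonal_one, map_one]
  · rw [hsum, ← hspec]
  · rw [hsum]
    conv_rhs => rw [hspec, ← map_mul, diagonal_mul_diagonal]
    simp only [sq, Complex.ofReal_mul]

/-- **Kadison's inequality** for a unital positive map. -/
theorem IsHermitian.posSemidef_map_mul_self_sub {m : Type*} [Fintype m] [DecidableEq m]
    (P : Matrix n n ℂ →ₗ[ℝ] Matrix m m ℂ) (hP : ∀ y, y.PosSemidef → (P y).PosSemidef)
    (hP1 : P 1 = 1) {x : Matrix n n ℂ} (hx : x.IsHermitian) :
    (P (x * x) - P x * P x).PosSemidef := by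
  obtain ⟨p, μ, hp, hp1, hpx, hpxx⟩ := hx.exists_spectral_resolution
  set X := P x
  have hQ1 : ∑ j, P (p j) = 1 := by rw [← map_sum, hp1, hP1]
  have hQX : ∑ j, μ j • P (p j) = X := by simp only [X, ← hpx, map_sum, map_smul]
  have hQXX : ∑ j, μ j ^ 2 • P (p j) = P (x * x) := by simp only [← hpxx, map_sum, map_smul]
  have hX : Xᴴ = X := by
    rw [← hQX]
    exact isSelfAdjoint_sum _ fun j _ => (hP _ (hp j)).isHermitian.smul (IsSelfAdjoint.all _)
  have key : P (x * x) - X * X = ∑ j, (μ j • 1 - X)ᴴ * P (p j) * (μ j • 1 - X) := by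
    calc P (x * x) - X * X
        = ∑ j, μ j ^ 2 • P (p j) - X * ∑ j, μ j • P (p j) - (∑ j, μ j • P (p j)) * X
          + X * (∑ j, P (p j)) * X := by rw [hQXX, hQX, hQ1]; noncomm_ring
      _ = ∑ j, (μ j ^ 2 • P (p j) - X * (μ j • P (p j)) - μ j • P (p j) * X
          + X * P (p j) * X) := by
        simp only [Finset.sum_add_distrib, Finset.sum_sub_distrib, Finset.mul_sum, Finset.sum_mul]
      _ = _ := by
        refine Finset.sum_congr rfl fun j _ => ?_
        rw [conjTranspose_sub, conjTranspose_smul, conjTranspose_one, hX, star_trivial]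
        simp only [sub_mul, mul_sub, smul_mul_assoc, mul_smul_comm, one_mul, mul_one, sq]
        module
  rw [key]
  exact posSemidef_sum _ fun j _ => (hP _ (hp j)).conjTranspose_mul_mul_same _

end Matrix

namespace Submodule

variable {A : Type*} [Ring A] [Algebra ℝ A] {J : Submodule ℝ A}

theorem mul_add_mul_mem_of_mul_self_mem (hJ : ∀ x ∈ J, x * x ∈ J) {x y : A} (hx : x ∈ J)
    (hy : y ∈ J) : x * y + y * x ∈ J := by
  have h : x * y + y * x = (x + y) * (x + y) - x * x - y * y := by noncomm_ring
  rw [h]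
  exact sub_mem (sub_mem (hJ _ (add_mem hx hy)) (hJ x hx)) (hJ y hy)

theorem pow_mem_of_mul_self_mem (h1 : 1 ∈ J) (hJ : ∀ x ∈ J, x * x ∈ J) {x : A} (hx : x ∈ J)
    (k : ℕ) : x ^ k ∈ J := by
  induction k with
  | zero => rwa [pow_zero]
  | succ k ih =>
    have h : x ^ (k + 1) = (2 : ℝ)⁻¹ • (x ^ k * x + x * x ^ k) := by
      rw [← pow_succ, ← pow_succ', ← two_smul ℝ, smul_smul, inv_mul_cancel₀ two_ne_zero, one_smul]
    rw [h]
    exact smul_mem _ _ (mul_add_mul_mem_of_mul_self_mem hJ ih hx)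

theorem cfc_mem_of_mul_self_mem [StarRing A] [TopologicalSpace A]
    [ContinuousFunctionalCalculus ℝ A IsSelfAdjoint] (h1 : 1 ∈ J) (hJ : ∀ x ∈ J, x * x ∈ J)
    {x : A} (hx : x ∈ J) (hfin : (spectrum ℝ x).Finite) (f : ℝ → ℝ) : cfc f x ∈ J := by
  by_cases hsa : IsSelfAdjoint x
  · -- on the finite spectrum, `f` agrees with its Lagrange interpolant `q`
    set q := Lagrange.interpolate hfin.toFinset id f
    have hq : cfc f x = aeval x q := by
      rw [← cfc_polynomial q x]
      exact cfc_congr fun r hr => (Lagrange.eval_interpolate_at_node (v := id) (r := f)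
        (Set.injOn_id _) (hfin.mem_toFinset.mpr hr)).symm
    rw [hq, aeval_eq_sum_range]
    exact sum_mem fun k _ => smul_mem _ _ (pow_mem_of_mul_self_mem h1 hJ hx k)
  · rw [cfc_apply_of_not_predicate x hsa]
    exact zero_mem J

theorem jordan_mem_of_mul_self_mem {m : ℕ} {J : Submodule ℝ (Matrix (Fin m) (Fin m) ℂ)}
    (hJ : ∀ x ∈ J, x * x ∈ J) {x y : Matrix (Fin m) (Fin m) ℂ} (hx : x ∈ J) (hy : y ∈ J) :
    jordan x y ∈ J := by
  have h : jordan x y = (2 : ℝ)⁻¹ • (x * y + y * x) := by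
    rw [jordan, RCLike.real_smul_eq_coe_smul (K := ℂ)]
    norm_num
  rw [h]
  exact smul_mem _ _ (mul_add_mul_mem_of_mul_self_mem hJ hx hy)

open scoped MatrixOrder in
theorem exists_mul_self_eq_of_posSemidef {ι : Type*} [Fintype ι] [DecidableEq ι]
    {J : Submodule ℝ (Matrix ι ι ℂ)} (h1 : 1 ∈ J) (hJ : ∀ x ∈ J, x * x ∈ J) {c : Matrix ι ι ℂ}
    (hc : c ∈ J) (hpos : c.PosSemidef) : ∃ x ∈ J, c = x * x := by
  refine ⟨cfc Real.sqrt c, cfc_mem_of_mul_self_mem h1 hJ hc finite_real_spectrum _, ?_⟩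
  calc c = cfc id c := (cfc_id ℝ c).symm
    _ = cfc (fun r => √r * √r) c := cfc_congr fun r hr =>
        (Real.mul_self_sqrt (spectrum_nonneg_of_nonneg hpos.nonneg hr)).symm
    _ = cfc Real.sqrt c * cfc Real.sqrt c := cfc_mul ..

end Submodule

namespace ProbModel

variable {V : Type} [NormedAddCommGroup V] [NormedSpace ℝ V] [FiniteDimensional ℝ V]
  (M : ProbModel V)

def toProperCone : ProperCone ℝ V where
  carrier := M.pos
  add_mem' hx hy := M.add_mem _ hx _ hy
  zero_mem' := by simpa using M.smul_mem 0 le_rfl _ M.unit_mem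
  smul_mem' c _ hx := M.smul_mem c c.2 _ hx
  isClosed' := M.closed

theorem mem_pos_of_forall_dualPos {v : V} (h : ∀ ω ∈ M.dualPos, 0 ≤ ω v) : v ∈ M.pos := by
  by_contra hv
  obtain ⟨f, hf, hfv⟩ := M.toProperCone.hyperplane_separation_point hv
  exact hfv.not_ge (h f fun e he => hf e he)

theorem span_dualPos : Submodule.span ℝ M.dualPos = ⊤ := by
  have h : (Submodule.span ℝ M.dualPos).dualCoannihilator = ⊥ := by
    refine (Submodule.eq_bot_iff _).mpr fun v hv => ?_
    have hv' : ∀ ω ∈ M.dualPos, ω v = 0 := by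
      simpa using (Submodule.coe_dualCoannihilator_span M.dualPos).subset hv
    exact M.pointed v (M.mem_pos_of_forall_dualPos fun ω hω => (hv' ω hω).ge)
      (M.mem_pos_of_forall_dualPos fun ω hω => by simp [hv' ω hω])
  rw [← Subspace.dualCoannihilator_dualAnnihilator_eq (W := Submodule.span ℝ M.dualPos), h,
    Submodule.dualAnnihilator_bot]

end ProbModel

namespace QEmbedding

variable {V : Type} [NormedAddCommGroup V] [NormedSpace ℝ V] [FiniteDimensional ℝ V]
  {M : ProbModel V} {n : ℕ}

theorem re_trace_mul (E : QEmbedding M n) (ω : Dual ℝ V) (e : V) :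
    (E.ψ ω * E.φ e).trace.re = ω e := by
  simp [E.pairing]

theorem φ_injective (E : QEmbedding M n) : Function.Injective E.φ := by
  refine (injective_iff_map_eq_zero _).mpr fun e he => ?_
  refine (forall_dual_apply_eq_zero_iff ℝ e).mp fun ω => ?_
  rw [← E.re_trace_mul, he, Matrix.mul_zero, trace_zero, Complex.zero_re]

noncomputable def compress (E : QEmbedding M n) {m : ℕ} (W : Matrix (Fin n) (Fin m) ℂ)
    (hW : Wᴴ * W = 1) (hψ : ∀ ω, W * Wᴴ * E.ψ ω * (W * Wᴴ) = E.ψ ω) : QEmbedding M m where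
  φ := compression W ∘ₗ E.φ
  ψ := compression W ∘ₗ E.ψ
  φ_herm a := isHermitian_conjTranspose_mul_mul W (E.φ_herm a)
  ψ_herm ω := isHermitian_conjTranspose_mul_mul W (E.ψ_herm ω)
  φ_pos a ha := (E.φ_pos a ha).conjTranspose_mul_mul_same W
  ψ_pos ω hω := (E.ψ_pos ω hω).conjTranspose_mul_mul_same W
  φ_unit := by simp [compression_apply, E.φ_unit, hW]
  pairing ω e := by
    simp only [LinearMap.comp_apply, compression_apply]
    calc (Wᴴ * E.ψ ω * W * (Wᴴ * E.φ e * W)).trace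
        = (Wᴴ * (E.ψ ω * (W * (Wᴴ * E.φ e))) * W).trace := by simp only [Matrix.mul_assoc]
      _ = (W * Wᴴ * E.ψ ω * (W * Wᴴ) * E.φ e).trace := by
        rw [trace_mul_comm]; simp only [Matrix.mul_assoc]
      _ = ω e := by rw [hψ, E.pairing]

theorem exists_posDef_ψ (E : QEmbedding M n) :
    ∃ (m : ℕ) (E' : QEmbedding M m) (ω : Dual ℝ V), (E'.ψ ω).PosDef := by
  classical
  obtain ⟨t, hts, -, hspan, -⟩ := Submodule.exists_finset_span_eq_linearIndepOn ℝ M.dualPos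
  set S := ∑ σ ∈ t, E.ψ σ
  have hS : S.PosSemidef := posSemidef_sum _ fun σ hσ => E.ψ_pos σ (hts hσ)
  obtain ⟨m, W, hW, hWS, hpd⟩ := hS.exists_isometry_posDef
  have hψ (ω : Dual ℝ V) : W * Wᴴ * E.ψ ω * (W * Wᴴ) = E.ψ ω := by
    have hω : ω ∈ Submodule.span ℝ (t : Set (Dual ℝ V)) := by
      rw [hspan, M.span_dualPos]; trivial
    induction hω using Submodule.span_induction with
    | mem σ hσ =>
      refine (E.ψ_pos σ (hts hσ)).mul_mul_eq_self_of_le ?_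
        (isHermitian_mul_conjTranspose_self W) (by rw [hWS])
      rw [show S = _ from (Finset.sum_erase_add _ _ hσ).symm, add_sub_cancel_right]
      exact posSemidef_sum _ fun σ' hσ' => E.ψ_pos σ' (hts (Finset.mem_of_mem_erase hσ'))
    | zero => simp
    | add x y _ _ hx hy => rw [map_add, Matrix.mul_add, Matrix.add_mul, hx, hy]
    | smul c x _ hx => rw [map_smul, Matrix.mul_smul, Matrix.smul_mul, hx]
  refine ⟨m, E.compress W hW hψ, ∑ σ ∈ t, σ, ?_⟩
  show (compression W (E.ψ (∑ σ ∈ t, σ))).PosDef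
  rwa [map_sum, compression_apply]

noncomputable def ψTranspose (E : QEmbedding M n) : Matrix (Fin n) (Fin n) ℂ →ₗ[ℝ] V :=
  (evalEquiv ℝ V).symm.toLinearMap ∘ₗ E.ψ.dualMap ∘ₗ
    (LinearMap.mul ℝ (Matrix (Fin n) (Fin n) ℂ)).flip.compr₂
      (Complex.reLm ∘ₗ traceLinearMap (Fin n) ℝ ℂ)

theorem apply_ψTranspose (E : QEmbedding M n) (ω : Dual ℝ V) (y : Matrix (Fin n) (Fin n) ℂ) :
    ω (E.ψTranspose y) = (E.ψ ω * y).trace.re := by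
  simp [ψTranspose]

theorem ψTranspose_φ (E : QEmbedding M n) (e : V) : E.ψTranspose (E.φ e) = e :=
  sub_eq_zero.mp <| (forall_dual_apply_eq_zero_iff ℝ _).mp fun ω => by
    rw [map_sub, apply_ψTranspose, re_trace_mul, sub_self]

theorem ψTranspose_mem_pos (E : QEmbedding M n) {y : Matrix (Fin n) (Fin n) ℂ}
    (hy : y.PosSemidef) : E.ψTranspose y ∈ M.pos :=
  M.mem_pos_of_forall_dualPos fun σ hσ => by
    rw [apply_ψTranspose]
    exact (Complex.nonneg_iff.mp ((E.ψ_pos σ hσ).trace_mul_nonneg hy)).1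

theorem φ_ψTranspose_mul_self (E : QEmbedding M n) {ω₀ : Dual ℝ V} (hω₀ : (E.ψ ω₀).PosDef)
    (e : V) : E.φ (E.ψTranspose (E.φ e * E.φ e)) = E.φ e * E.φ e := by
  set P := E.φ ∘ₗ E.ψTranspose
  have hP (y : Matrix (Fin n) (Fin n) ℂ) (hy : y.PosSemidef) : (P y).PosSemidef :=
    E.φ_pos _ (E.ψTranspose_mem_pos hy)
  have hP1 : P 1 = 1 := by
    rw [← E.φ_unit, LinearMap.comp_apply, ψTranspose_φ]
  have hPx : P (E.φ e) = E.φ e := by rw [LinearMap.comp_apply, ψTranspose_φ]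
  set x := E.φ e
  have hK := (E.φ_herm e).posSemidef_map_mul_self_sub P hP hP1
  rw [hPx] at hK
  -- `P` preserves `Re tr (ψ ω₀ ·)`
  have hre : (E.ψ ω₀ * (P (x * x) - x * x)).trace.re = 0 := by
    rw [Matrix.mul_sub, trace_sub, Complex.sub_re, LinearMap.comp_apply, re_trace_mul,
      apply_ψTranspose, sub_self]
  have htr : (E.ψ ω₀ * (P (x * x) - x * x)).trace = 0 := by
    have := Complex.nonneg_iff.mp (hω₀.posSemidef.trace_mul_nonneg hK)
    exact Complex.ext hre this.2.symm
  exact sub_eq_zero.mp (hω₀.eq_zero_of_trace_mul_eq_zero hK htr)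

end QEmbedding

/-- **Main Theorem, 'only if' direction.** If a probabilistic model
`(A, A₊, u_A)` can be embedded into the quantum model `Q_n` for some `n`, then there
are `m ∈ ℕ` and a real-linear subspace `J` of the `m × m` complex Hermitian matrices
with `I ∈ J`, `J` closed under the Jordan product, and a real-linear bijection
`T : A → J` with `T(u_A) = I` and `T(A₊) = {x² : x ∈ J}`; i.e. `A` is order-isomorphic
to a Euclidean special Jordan algebra with its cone of squares. -/
theorem embeddable_iff_jordan_onlyIf {V : Type} [NormedAddCommGroup V]
    [NormedSpace ℝ V] [FiniteDimensional ℝ V] (M : ProbModel V) (n : ℕ)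
    (E : QEmbedding M n) :
    ∃ (m : ℕ) (J : Submodule ℝ (Matrix (Fin m) (Fin m) ℂ))
      (T : V →ₗ[ℝ] Matrix (Fin m) (Fin m) ℂ),
        (∀ x ∈ J, Matrix.IsHermitian x)
        ∧ (1 : Matrix (Fin m) (Fin m) ℂ) ∈ J
        ∧ (∀ x ∈ J, ∀ y ∈ J, jordan x y ∈ J)
        ∧ Function.Injective T
        ∧ LinearMap.range T = J
        ∧ T M.unit = 1
        ∧ T '' M.pos = {y : Matrix (Fin m) (Fin m) ℂ | ∃ x ∈ J, y = x * x} := by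
  obtain ⟨m, E, ω₀, hω₀⟩ := E.exists_posDef_ψ
  have h1 : (1 : Matrix (Fin m) (Fin m) ℂ) ∈ LinearMap.range E.φ := ⟨M.unit, E.φ_unit⟩
  have hsq : ∀ x ∈ LinearMap.range E.φ, x * x ∈ LinearMap.range E.φ := by
    rintro _ ⟨e, rfl⟩
    exact ⟨_, E.φ_ψTranspose_mul_self hω₀ e⟩
  refine ⟨m, LinearMap.range E.φ, E.φ, ?_, h1, fun x hx y hy => ?_, E.φ_injective, rfl,
    E.φ_unit, ?_⟩
  · rintro _ ⟨e, rfl⟩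
    exact E.φ_herm e
  · exact Submodule.jordan_mem_of_mul_self_mem hsq hx hy
  · ext y
    constructor
    · rintro ⟨a, ha, rfl⟩
      exact Submodule.exists_mul_self_eq_of_posSemidef h1 hsq ⟨a, rfl⟩ (E.φ_pos a ha)
    · rintro ⟨_, ⟨e, rfl⟩, rfl⟩
      refine ⟨_, E.ψTranspose_mem_pos ?_, E.φ_ψTranspose_mul_self hω₀ e⟩
      simpa only [(E.φ_herm e).eq] using posSemidef_conjTranspose_mul_self (E.φ e)
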